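/- (Asymptotic error-rate ratio) If E_{nΘ_μ} → ∞ as n → ∞, then E_{nΘ_ξ}/E_{nΘ_μ} → 1; more precisely E_{nΘ_ξ}/E_{nΘ_μ} ≤ 1 + 2H_n/E_{nΘ_μ} + 2√(H_n/E_{nΘ_μ}) with H_n ≤ ln(1/w_μ) bounded, so the ratio is 1 + O(E_{nΘ_μ}^{-1/2}). -/

import Mathlib

open scoped BigOperators

/-- Conditional probability ρ(a | l) := ρ(l·a)/ρ(l) via Bayes' rule. -/
noncomputable def condP {A : Type} [Fintype A] (ρ : List A → ℝ) (l : List A) (a : A) : ℝ :=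
  ρ (l ++ [a]) / ρ l

/-- Cumulative expected conditional relative entropy H_n between μ and ξ. -/
noncomputable def relEnt {A : Type} [Fintype A] (μ ξ : List A → ℝ) (n : ℕ) : ℝ :=
  ∑ k ∈ Finset.range n, ∑ x : Fin k → A, μ (List.ofFn x) *
    ∑ a : A, condP μ (List.ofFn x) a * Real.log (condP μ (List.ofFn x) a / condP ξ (List.ofFn x) a)

/-- Total μ-expected number of prediction errors in the first n predictions
of the deterministic predictor p. -/
noncomputable def errE {A : Type} [Fintype A] (μ : List A → ℝ) (p : List A → A) (n : ℕ) : ℝ :=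
  ∑ k ∈ Finset.range n, ∑ x : Fin k → A,
    μ (List.ofFn x) * (1 - condP μ (List.ofFn x) (p (List.ofFn x)))

/-!
Fix a history `l` with `μ l > 0`, write `y = μ(·|l)`, `z = ξ(·|l)` and `h` for their relative
entropy, and let `b`, `a` be the letters predicted from `y` and from `z`. Pinsker's inequality for
the binary coarse-grainings at `a` and at `b` gives `(y b - y a) ^ 2 ≤ 2 h`, and together with
`y a ≤ 1 - y b` this yields `1 - y a ≤ (1 - y b) + 2 h + 2 √((1 - y b) h)`. Inequalities of this
shape survive scaling by `μ l` and, by Cauchy–Schwarz, summation; so the expected errors satisfy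
`E_ξ ≤ E_μ + 2 H + 2 √(E_μ H)`. By the chain rule `H_n` is the relative entropy between the
`n`-letter marginals of `μ` and `ξ`, hence at most `log (1 / w)` because `ξ ≥ w μ`, and dividing by
`E_μ → ∞` squeezes the error ratio to `1`.
-/

open Real Finset Filter Topology

lemma mul_log_add_sub_mul_le_mul_log_div {a b r : ℝ} (ha : 0 ≤ a) (hb : 0 ≤ b)
    (hab : b = 0 → a = 0) (hr : 0 < r) :
    a * log r + a - b * r ≤ a * log (a / b) := by
  rcases ha.eq_or_lt with rfl | ha
  · simpa using mul_nonneg hb hr.le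
  have hb : 0 < b := hb.lt_of_ne fun h => ha.ne' (hab h.symm)
  have hlog : log (a / b) = log r - log (b * r / a) := by
    rw [← log_div (by positivity) (by positivity)]
    congr 1
    field_simp
  have hsub : a * (b * r / a - 1) = b * r - a := by field_simp
  rw [hlog]
  nlinarith [log_le_sub_one_of_pos (show 0 < b * r / a by positivity)]

theorem Finset.sum_mul_log_sum_div_le {ι : Type*} (s : Finset ι) {a b : ι → ℝ}
    (ha : ∀ i ∈ s, 0 ≤ a i) (hb : ∀ i ∈ s, 0 ≤ b i) (hab : ∀ i ∈ s, b i = 0 → a i = 0) :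
    (∑ i ∈ s, a i) * log ((∑ i ∈ s, a i) / ∑ i ∈ s, b i) ≤ ∑ i ∈ s, a i * log (a i / b i) := by
  rcases (sum_nonneg ha).eq_or_lt with hA | hA
  · rw [← hA, zero_mul]
    exact sum_nonneg fun i hi => by rw [(sum_eq_zero_iff_of_nonneg ha).1 hA.symm i hi, zero_mul]
  have hB : 0 < ∑ i ∈ s, b i := by
    refine (sum_nonneg hb).lt_of_ne fun hB => hA.ne' (sum_eq_zero fun i hi => hab i hi ?_)
    exact (sum_eq_zero_iff_of_nonneg hb).1 hB.symm i hi
  set r := (∑ i ∈ s, a i) / ∑ i ∈ s, b i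
  -- the tangent-line bound at the ratio `r` of the totals, summed over `s`
  calc (∑ i ∈ s, a i) * log r
      = ∑ i ∈ s, (a i * log r + a i - b i * r) := by
        have hBr : (∑ i ∈ s, b i) * r = ∑ i ∈ s, a i := mul_div_cancel₀ _ hB.ne'
        rw [sum_sub_distrib, sum_add_distrib, ← sum_mul, ← sum_mul, hBr]
        ring
    _ ≤ ∑ i ∈ s, a i * log (a i / b i) :=
        sum_le_sum fun i hi =>
          mul_log_add_sub_mul_le_mul_log_div (ha i hi) (hb i hi) (hab i hi) (by positivity)

-- binary relative entropy minus `2 (p - x) ^ 2`, up to terms independent of `x`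
noncomputable def pinskerGap (p x : ℝ) : ℝ :=
  -(p * log x) - (1 - p) * log (1 - x) - 2 * (p - x) ^ 2

lemma hasDerivAt_pinskerGap (p : ℝ) {x : ℝ} (hx0 : 0 < x) (hx1 : x < 1) :
    HasDerivAt (pinskerGap p) ((x - p) * (1 - 2 * x) ^ 2 / (x * (1 - x))) x := by
  have h1x : (1 : ℝ) - x ≠ 0 := by linarith
  have hlog : HasDerivAt (fun x : ℝ => log (1 - x)) ((1 - x)⁻¹ * (-1)) x :=
    (hasDerivAt_log h1x).comp x ((hasDerivAt_id x).const_sub 1)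
  have := (((hasDerivAt_log hx0.ne').const_mul p).neg.sub (hlog.const_mul (1 - p))).sub
    ((((hasDerivAt_id x).const_sub p).pow 2).const_mul 2)
  refine this.congr_deriv ?_
  simp only [id]
  field_simp
  ring

lemma monotoneOn_pinskerGap {p q : ℝ} (hp : 0 ≤ p) (hq : q < 1) :
    MonotoneOn (pinskerGap p) (Set.Icc p q) := by
  have hcont : ContinuousOn (fun x => p * log x) (Set.Icc p q) := by
    rcases hp.eq_or_lt with rfl | hp
    · simpa using continuousOn_const
    · exact continuousOn_const.mul (continuousOn_id.log fun x hx => (hp.trans_le hx.1).ne')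
  refine monotoneOn_of_hasDerivWithinAt_nonneg (convex_Icc p q)
    (f' := fun x => (x - p) * (1 - 2 * x) ^ 2 / (x * (1 - x))) ?_ (fun x hx => ?_)
    (fun x hx => ?_)
  · refine (hcont.neg.sub (continuousOn_const.mul ?_)).sub (by fun_prop)
    exact (continuousOn_const.sub continuousOn_id).log fun x hx =>
      (sub_pos.2 (hx.2.trans_lt hq)).ne'
  · rw [interior_Icc] at hx
    exact (hasDerivAt_pinskerGap p (hp.trans_lt hx.1) (hx.2.trans hq)).hasDerivWithinAt
  · rw [interior_Icc] at hx
    have hx0 : 0 < x := hp.trans_lt hx.1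
    have hx1 : x < 1 := hx.2.trans hq
    exact div_nonneg (mul_nonneg (by linarith [hx.1]) (sq_nonneg _))
      (mul_nonneg hx0.le (by linarith))

lemma pinskerGap_le {p q : ℝ} (hp : 0 ≤ p) (hpq : p ≤ q) (hq : q < 1) :
    pinskerGap p p ≤ pinskerGap p q :=
  monotoneOn_pinskerGap hp hq (Set.left_mem_Icc.2 hpq) (Set.right_mem_Icc.2 hpq) hpq

lemma mul_log_div_eq_sub {u v : ℝ} (hv : 0 < v) : u * log (u / v) = u * log u - u * log v := by
  rcases eq_or_ne u 0 with rfl | hu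
  · simp
  · rw [log_div hu hv.ne']
    ring

theorem binary_pinsker {p q : ℝ} (hp0 : 0 ≤ p) (hp1 : p ≤ 1) (hq0 : 0 < q) (hq1 : q < 1) :
    2 * (p - q) ^ 2 ≤ p * log (p / q) + (1 - p) * log ((1 - p) / (1 - q)) := by
  rw [mul_log_div_eq_sub hq0, mul_log_div_eq_sub (sub_pos.2 hq1)]
  rcases le_total p q with hpq | hqp
  · have := pinskerGap_le hp0 hpq hq1
    simp only [pinskerGap] at this
    linarith
  · -- the symmetry `(p, q) ↦ (1 - p, 1 - q)` reduces to the case `p ≤ q`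
    have := pinskerGap_le (p := 1 - p) (q := 1 - q) (by linarith) (by linarith) (by linarith)
    simp only [pinskerGap, sub_sub_cancel] at this
    nlinarith

lemma add_le_one_of_mem_stdSimplex {A : Type*} [Fintype A] {v : A → ℝ}
    (hv : v ∈ stdSimplex ℝ A) {a b : A} (hab : a ≠ b) : v a + v b ≤ 1 := by
  classical
  rw [← sum_pair hab, ← hv.2]
  exact sum_le_univ_sum_of_nonneg hv.1

section DiscreteKL

variable {A : Type*} [Fintype A]

noncomputable def discreteKL (y z : A → ℝ) : ℝ := ∑ c, y c * log (y c / z c)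

variable {y z : A → ℝ} (hy : y ∈ stdSimplex ℝ A) (hz : z ∈ stdSimplex ℝ A)
  (hzy : ∀ c, z c = 0 → y c = 0)
include hy hz hzy

lemma discreteKL_nonneg : 0 ≤ discreteKL y z := by
  simpa [discreteKL, hy.2, hz.2] using
    sum_mul_log_sum_div_le univ (fun c _ => hy.1 c) (fun c _ => hz.1 c) (fun c _ => hzy c)

lemma binaryKL_le_discreteKL (j : A) :
    y j * log (y j / z j) + (1 - y j) * log ((1 - y j) / (1 - z j)) ≤ discreteKL y z := by
  classical
  have hys : ∑ c ∈ univ.erase j, y c = 1 - y j := by rw [sum_erase_eq_sub (mem_univ j), hy.2]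
  have hzs : ∑ c ∈ univ.erase j, z c = 1 - z j := by rw [sum_erase_eq_sub (mem_univ j), hz.2]
  rw [discreteKL, ← add_sum_erase _ _ (mem_univ j)]
  gcongr
  simpa [hys, hzs] using sum_mul_log_sum_div_le (univ.erase j) (fun c _ => hy.1 c)
    (fun c _ => hz.1 c) (fun c _ => hzy c)

lemma two_mul_sq_sub_le_discreteKL {j : A} (hzj0 : 0 < z j) (hzj1 : z j < 1) :
    2 * (y j - z j) ^ 2 ≤ discreteKL y z :=
  (binary_pinsker (hy.1 j) (mem_Icc_of_mem_stdSimplex hy j).2 hzj0 hzj1).trans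
    (binaryKL_le_discreteKL hy hz hzy j)

lemma sq_sub_le_two_mul_discreteKL {a b : A} (hab : a ≠ b) (hb : ∀ c, y c ≤ y b)
    (ha : ∀ c, z c ≤ z a) : (y b - y a) ^ 2 ≤ 2 * discreteKL y z := by
  have hyb : 0 < y b := by
    by_contra! h
    have : ∑ c, y c ≤ 0 := sum_nonpos fun c _ => (hb c).trans h
    linarith [hy.2]
  have hzb : 0 < z b := (hz.1 b).lt_of_ne fun h => hyb.ne' (hzy b h.symm)
  have hza : 0 < z a := hzb.trans_le (ha b)
  have hzab := add_le_one_of_mem_stdSimplex hz hab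
  have hKb := two_mul_sq_sub_le_discreteKL hy hz hzy hzb (by linarith)
  have hKa := two_mul_sq_sub_le_discreteKL hy hz hzy hza (by linarith)
  -- `y b - y a ≤ (y b - z b) + (z a - y a)` since `z b ≤ z a`
  nlinarith [ha b, hb a, sq_nonneg (y b - z b - (z a - y a))]

end DiscreteKL

def ExcessBound (f p g : ℝ) : Prop := f ≤ p + 2 * g + 2 * √(p * g)

namespace ExcessBound

variable {f p g c : ℝ}

lemma mul_left (hc : 0 ≤ c) (h : ExcessBound f p g) : ExcessBound (c * f) (c * p) (c * g) := by
  unfold ExcessBound at *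
  rw [show c * p * (c * g) = c ^ 2 * (p * g) by ring, sqrt_mul (sq_nonneg c), sqrt_sq hc]
  nlinarith [mul_le_mul_of_nonneg_left h hc]

lemma sum {ι : Type*} {s : Finset ι} {f p g : ι → ℝ} (hp : ∀ i, 0 ≤ p i) (hg : ∀ i, 0 ≤ g i)
    (h : ∀ i ∈ s, ExcessBound (f i) (p i) (g i)) :
    ExcessBound (∑ i ∈ s, f i) (∑ i ∈ s, p i) (∑ i ∈ s, g i) := by
  have hCS : ∑ i ∈ s, √(p i * g i) ≤ √((∑ i ∈ s, p i) * ∑ i ∈ s, g i) := by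
    rw [sqrt_mul (sum_nonneg fun i _ => hp i)]
    simpa only [sqrt_mul (hp _)] using sum_sqrt_mul_sqrt_le s hp hg
  calc ∑ i ∈ s, f i ≤ ∑ i ∈ s, (p i + 2 * g i + 2 * √(p i * g i)) := sum_le_sum h
    _ = ∑ i ∈ s, p i + 2 * ∑ i ∈ s, g i + 2 * ∑ i ∈ s, √(p i * g i) := by
        simp only [sum_add_distrib, mul_sum]
    _ ≤ _ := by gcongr

lemma div_le (hp : 0 < p) (hg : 0 ≤ g) (h : ExcessBound f p g) :
    f / p ≤ 1 + 2 * g / p + 2 * √(g / p) := by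
  have hsqrt : √(p * g) = p * √(g / p) := by
    rw [show p * g = p ^ 2 * (g / p) by field_simp, sqrt_mul (sq_nonneg p), sqrt_sq hp.le]
  rw [div_le_iff₀ hp]
  calc f ≤ p + 2 * g + 2 * √(p * g) := h
    _ = (1 + 2 * g / p + 2 * √(g / p)) * p := by
        rw [hsqrt]
        field_simp

lemma tendsto_div_nhds_one {ι : Type*} {l : Filter ι} {f p g : ι → ℝ} {C : ℝ}
    (hp : Tendsto p l atTop) (hg : ∀ i, 0 ≤ g i) (hgC : ∀ i, g i ≤ C) (hpf : ∀ i, p i ≤ f i)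
    (h : ∀ i, ExcessBound (f i) (p i) (g i)) : Tendsto (fun i => f i / p i) l (𝓝 1) := by
  have hpos : ∀ᶠ i in l, 0 < p i := hp.eventually_gt_atTop 0
  have hratio : Tendsto (fun i => g i / p i) l (𝓝 0) :=
    tendsto_of_tendsto_of_tendsto_of_le_of_le' tendsto_const_nhds
      (tendsto_const_nhds.div_atTop hp)
      (hpos.mono fun i hi => div_nonneg (hg i) hi.le)
      (hpos.mono fun i hi => div_le_div_of_nonneg_right (hgC i) hi.le)
  have hupper : Tendsto (fun i => 1 + 2 * g i / p i + 2 * √(g i / p i)) l (𝓝 1) := by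
    simpa [mul_div_assoc] using
      ((hratio.const_mul 2).const_add 1).add (hratio.sqrt.const_mul 2)
  exact tendsto_of_tendsto_of_tendsto_of_le_of_le' tendsto_const_nhds hupper
    (hpos.mono fun i hi => (one_le_div hi).2 (hpf i))
    (hpos.mono fun i hi => (h i).div_le hi (hg i))

end ExcessBound

lemma le_sq_add_mul_of_le {δ t u : ℝ} (hδ : 0 ≤ δ) (ht : 0 ≤ t) (hδu : δ ≤ u)
    (h1 : 1 ≤ δ + t ^ 2) : δ ≤ u ^ 2 + t * u := by
  rcases le_total t 1 with ht1 | ht1 <;> nlinarith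

theorem excessBound_one_sub_of_isMax {A : Type*} [Fintype A] {y z : A → ℝ}
    (hy : y ∈ stdSimplex ℝ A) (hz : z ∈ stdSimplex ℝ A) (hzy : ∀ c, z c = 0 → y c = 0)
    {a b : A} (hb : ∀ c, y c ≤ y b) (ha : ∀ c, z c ≤ z a) :
    ExcessBound (1 - y a) (1 - y b) (discreteKL y z) := by
  have hK := discreteKL_nonneg hy hz hzy
  have he : 0 ≤ 1 - y b := sub_nonneg.2 (mem_Icc_of_mem_stdSimplex hy b).2
  unfold ExcessBound
  rcases eq_or_ne a b with rfl | hab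
  · nlinarith [sqrt_nonneg ((1 - y a) * discreteKL y z)]
  -- with `t = √(2 (1 - y b))` and `u = √(2 KL)`, the claim reads `y b - y a ≤ u ^ 2 + t * u`
  have hδu : y b - y a ≤ √(2 * discreteKL y z) :=
    le_sqrt_of_sq_le (sq_sub_le_two_mul_discreteKL hy hz hzy hab hb ha)
  have key := le_sq_add_mul_of_le (sub_nonneg.2 (hb a)) (sqrt_nonneg (2 * (1 - y b))) hδu
    (by rw [sq_sqrt (by positivity)]; linarith [add_le_one_of_mem_stdSimplex hy hab])
  have htu : √(2 * (1 - y b)) * √(2 * discreteKL y z) = 2 * √((1 - y b) * discreteKL y z) := by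
    rw [← sqrt_mul (by positivity), show 2 * (1 - y b) * (2 * discreteKL y z) =
      2 ^ 2 * ((1 - y b) * discreteKL y z) by ring, sqrt_mul (by positivity), sqrt_sq zero_le_two]
  rw [sq_sqrt (by positivity), htu] at key
  linarith

structure IsPrefixMeasure {A : Type*} [Fintype A] (μ : List A → ℝ) : Prop where
  nonneg : ∀ l, 0 ≤ μ l
  nil : μ [] = 1
  sum_append_singleton : ∀ l, ∑ a, μ (l ++ [a]) = μ l

lemma sum_ofFn_succ {A M : Type*} [Fintype A] [AddCommMonoid M] (f : List A → M) (n : ℕ) :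
    ∑ x : Fin (n + 1) → A, f (List.ofFn x) = ∑ x : Fin n → A, ∑ a, f (List.ofFn x ++ [a]) := by
  rw [← (Fin.snocEquiv fun _ => A).sum_comp, Fintype.sum_prod_type, sum_comm]
  refine sum_congr rfl fun x _ => sum_congr rfl fun a _ => ?_
  rw [List.ofFn_succ']
  simp [Fin.snocEquiv]

namespace IsPrefixMeasure

variable {A : Type*} [Fintype A] {μ : List A → ℝ}

lemma append_singleton_le (hμ : IsPrefixMeasure μ) (l : List A) (a : A) :
    μ (l ++ [a]) ≤ μ l :=
  hμ.sum_append_singleton l ▸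
    single_le_sum (f := fun b => μ (l ++ [b])) (fun _ _ => hμ.nonneg _) (mem_univ a)

lemma le_one (hμ : IsPrefixMeasure μ) (l : List A) : μ l ≤ 1 := by
  induction l using List.reverseRecOn with
  | nil => exact hμ.nil.le
  | append_singleton l a ih => exact (hμ.append_singleton_le l a).trans ih

lemma sum_ofFn (hμ : IsPrefixMeasure μ) (n : ℕ) : ∑ x : Fin n → A, μ (List.ofFn x) = 1 := by
  induction n with
  | zero => simpa using hμ.nil
  | succ n ih => simpa only [sum_ofFn_succ, hμ.sum_append_singleton] using ih

end IsPrefixMeasure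

section Mixture

variable {ι A : Type*} [Fintype A] {w : ι → ℝ} {μs : ι → List A → ℝ}
  (hw : ∀ i, 0 ≤ w i) (hμs : ∀ i, IsPrefixMeasure (μs i))
include hw hμs

lemma summable_mul_of_isPrefixMeasure (hw1 : Summable w) (l : List A) :
    Summable fun i => w i * μs i l :=
  .of_nonneg_of_le (fun i => mul_nonneg (hw i) ((hμs i).nonneg l))
    (fun i => mul_le_of_le_one_right (hw i) ((hμs i).le_one l)) hw1

lemma isPrefixMeasure_tsum (hw1 : HasSum w 1) : IsPrefixMeasure fun l => ∑' i, w i * μs i l where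
  nonneg l := tsum_nonneg fun i => mul_nonneg (hw i) ((hμs i).nonneg l)
  nil := by simpa [(hμs _).nil] using hw1.tsum_eq
  sum_append_singleton l := by
    rw [← Summable.tsum_finsetSum fun a _ =>
      summable_mul_of_isPrefixMeasure hw hμs hw1.summable (l ++ [a])]
    simp only [← mul_sum, (hμs _).sum_append_singleton]

lemma mul_le_tsum_of_isPrefixMeasure (hw1 : Summable w) (i : ι) (l : List A) :
    w i * μs i l ≤ ∑' j, w j * μs j l :=
  (summable_mul_of_isPrefixMeasure hw hμs hw1 l).le_tsum i
    fun j _ => mul_nonneg (hw j) ((hμs j).nonneg l)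

end Mixture

section Prediction

variable {A : Type} [Fintype A] {μ ξ : List A → ℝ}

lemma IsPrefixMeasure.condP_mem_stdSimplex (hμ : IsPrefixMeasure μ) {l : List A}
    (hl : 0 < μ l) : condP μ l ∈ stdSimplex ℝ A :=
  ⟨fun _ => div_nonneg (hμ.nonneg _) hl.le, by
    simp only [condP, ← sum_div, hμ.sum_append_singleton, div_self hl.ne']⟩

lemma condP_eq_zero_of_dominated (hμ : ∀ l, 0 ≤ μ l) (hdom : ∀ l, 0 < μ l → 0 < ξ l)
    {l : List A} (hξl : 0 < ξ l) {a : A} (h : condP ξ l a = 0) : condP μ l a = 0 := by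
  have hξa : ξ (l ++ [a]) = 0 := by simpa [condP, hξl.ne'] using h
  have hμa : μ (l ++ [a]) = 0 :=
    le_antisymm (not_lt.1 fun hpos => (hdom _ hpos).ne' hξa) (hμ _)
  simp [condP, hμa]

lemma mul_discreteKL_condP_nonneg (hμ : IsPrefixMeasure μ) (hξ : IsPrefixMeasure ξ)
    (hdom : ∀ l, 0 < μ l → 0 < ξ l) (l : List A) :
    0 ≤ μ l * discreteKL (condP μ l) (condP ξ l) := by
  rcases (hμ.nonneg l).eq_or_lt with hl | hl
  · rw [← hl, zero_mul]
  exact mul_nonneg hl.le (discreteKL_nonneg (hμ.condP_mem_stdSimplex hl)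
    (hξ.condP_mem_stdSimplex (hdom l hl))
    fun _ => condP_eq_zero_of_dominated hμ.nonneg hdom (hdom l hl))

lemma relEnt_nonneg (hμ : IsPrefixMeasure μ) (hξ : IsPrefixMeasure ξ)
    (hdom : ∀ l, 0 < μ l → 0 < ξ l) (n : ℕ) : 0 ≤ relEnt μ ξ n :=
  sum_nonneg fun _ _ => sum_nonneg fun _ _ => mul_discreteKL_condP_nonneg hμ hξ hdom _

lemma mul_mul_log_mul_div_mul {m s y z : ℝ} (hm : 0 < m) (hs : 0 < s) (hzy : z = 0 → y = 0) :
    m * y * log (m * y / (s * z)) = y * (m * log (m / s)) + m * (y * log (y / z)) := by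
  rcases eq_or_ne y 0 with rfl | hy
  · simp
  have hz : z ≠ 0 := fun h => hy (hzy h)
  rw [mul_div_mul_comm, log_mul (div_pos hm hs).ne' (div_ne_zero hy hz)]
  ring

lemma IsPrefixMeasure.sum_mul_log_div_append_singleton (hμ : IsPrefixMeasure μ)
    (hdom : ∀ l, 0 < μ l → 0 < ξ l) (l : List A) :
    ∑ a, μ (l ++ [a]) * log (μ (l ++ [a]) / ξ (l ++ [a])) =
      μ l * log (μ l / ξ l) + μ l * discreteKL (condP μ l) (condP ξ l) := by
  rcases (hμ.nonneg l).eq_or_lt with hl | hl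
  · have hzero : ∀ a, μ (l ++ [a]) = 0 := fun a =>
      le_antisymm (hl ▸ hμ.append_singleton_le l a) (hμ.nonneg _)
    simp [hzero, ← hl]
  have hξl := hdom l hl
  have hμa : ∀ a, μ (l ++ [a]) = μ l * condP μ l a := fun a => (mul_div_cancel₀ _ hl.ne').symm
  have hξa : ∀ a, ξ (l ++ [a]) = ξ l * condP ξ l a := fun a => (mul_div_cancel₀ _ hξl.ne').symm
  simp_rw [hμa, hξa, mul_mul_log_mul_div_mul hl hξl
    (condP_eq_zero_of_dominated hμ.nonneg hdom hξl), sum_add_distrib, ← sum_mul,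
    (hμ.condP_mem_stdSimplex hl).2, one_mul, discreteKL, mul_sum]

lemma relEnt_succ (n : ℕ) :
    relEnt μ ξ (n + 1) = relEnt μ ξ n + ∑ x : Fin n → A,
      μ (List.ofFn x) * discreteKL (condP μ (List.ofFn x)) (condP ξ (List.ofFn x)) :=
  sum_range_succ _ _

lemma relEnt_eq_sum_mul_log_div (hμ : IsPrefixMeasure μ) (hξ : ξ [] = 1)
    (hdom : ∀ l, 0 < μ l → 0 < ξ l) (n : ℕ) :
    relEnt μ ξ n = ∑ x : Fin n → A, μ (List.ofFn x) * log (μ (List.ofFn x) / ξ (List.ofFn x)) := by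
  induction n with
  | zero => simp [relEnt, hμ.nil, hξ]
  | succ n ih =>
    rw [relEnt_succ, ih, sum_ofFn_succ (fun l => μ l * log (μ l / ξ l)), ← sum_add_distrib]
    simp only [hμ.sum_mul_log_div_append_singleton hdom]

lemma relEnt_le_log_inv (hμ : IsPrefixMeasure μ) (hξ : ξ [] = 1) {w : ℝ} (hw : 0 < w)
    (hwξ : ∀ l, w * μ l ≤ ξ l) (n : ℕ) : relEnt μ ξ n ≤ log w⁻¹ := by
  have hdom : ∀ l, 0 < μ l → 0 < ξ l := fun l hl => (mul_pos hw hl).trans_le (hwξ l)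
  rw [relEnt_eq_sum_mul_log_div hμ hξ hdom, ← one_mul (log w⁻¹), ← hμ.sum_ofFn n, sum_mul]
  refine sum_le_sum fun x _ => ?_
  rcases (hμ.nonneg (List.ofFn x)).eq_or_lt with hl | hl
  · simp [← hl]
  refine mul_le_mul_of_nonneg_left (log_le_log (div_pos hl (hdom _ hl)) ?_) hl.le
  rw [div_le_iff₀ (hdom _ hl), le_inv_mul_iff₀ hw]
  exact hwξ _

lemma mul_one_sub_condP_nonneg (hμ : IsPrefixMeasure μ) (l : List A) (a : A) :
    0 ≤ μ l * (1 - condP μ l a) := by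
  rcases (hμ.nonneg l).eq_or_lt with hl | hl
  · rw [← hl, zero_mul]
  exact mul_nonneg hl.le
    (sub_nonneg.2 (mem_Icc_of_mem_stdSimplex (hμ.condP_mem_stdSimplex hl) a).2)

variable {predμ predξ : List A → A}

lemma errE_le_errE_of_isMax (hμ : ∀ l, 0 ≤ μ l)
    (hpredμ : ∀ l a, condP μ l a ≤ condP μ l (predμ l)) (pred : List A → A) (n : ℕ) :
    errE μ predμ n ≤ errE μ pred n :=
  sum_le_sum fun _ _ => sum_le_sum fun _ _ =>
    mul_le_mul_of_nonneg_left (sub_le_sub_left (hpredμ _ _) 1) (hμ _)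

variable (hμ : IsPrefixMeasure μ) (hξ : IsPrefixMeasure ξ) (hdom : ∀ l, 0 < μ l → 0 < ξ l)
  (hpredμ : ∀ l a, condP μ l a ≤ condP μ l (predμ l))
  (hpredξ : ∀ l a, condP ξ l a ≤ condP ξ l (predξ l))
include hμ hξ hdom hpredμ hpredξ

lemma excessBound_mul_one_sub_condP (l : List A) :
    ExcessBound (μ l * (1 - condP μ l (predξ l))) (μ l * (1 - condP μ l (predμ l)))
      (μ l * discreteKL (condP μ l) (condP ξ l)) := by
  rcases (hμ.nonneg l).eq_or_lt with hl | hl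
  · simp [← hl, ExcessBound]
  exact (excessBound_one_sub_of_isMax (hμ.condP_mem_stdSimplex hl)
    (hξ.condP_mem_stdSimplex (hdom l hl))
    (fun _ => condP_eq_zero_of_dominated hμ.nonneg hdom (hdom l hl))
    (hpredμ l) (hpredξ l)).mul_left hl.le

lemma excessBound_errE (n : ℕ) :
    ExcessBound (errE μ predξ n) (errE μ predμ n) (relEnt μ ξ n) :=
  .sum (fun _ => sum_nonneg fun _ _ => mul_one_sub_condP_nonneg hμ _ _)
    (fun _ => sum_nonneg fun _ _ => mul_discreteKL_condP_nonneg hμ hξ hdom _) fun _ _ =>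
      .sum (fun _ => mul_one_sub_condP_nonneg hμ _ _)
        (fun _ => mul_discreteKL_condP_nonneg hμ hξ hdom _) fun _ _ =>
          excessBound_mul_one_sub_condP hμ hξ hdom hpredμ hpredξ _

end Prediction

/-- Asymptotic error-rate ratio: E_{nΘ_ξ}/E_{nΘ_μ} ≤ 1 + 2H_n/E_{nΘ_μ} + 2√(H_n/E_{nΘ_μ}),
and if E_{nΘ_μ} → ∞ then the ratio tends to 1. -/
theorem error_ratio_tendsto_one {A : Type} [Fintype A]
    (μs : ℕ → List A → ℝ) (w : ℕ → ℝ)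
    (hwpos : ∀ i, 0 < w i) (hwsum : HasSum w 1)
    (hnn : ∀ i l, 0 ≤ μs i l)
    (hroot : ∀ i, μs i [] = 1)
    (hcompat : ∀ i l, ∑ a : A, μs i (l ++ [a]) = μs i l)
    (ξ : List A → ℝ) (hξ : ∀ l, ξ l = ∑' i, w i * μs i l)
    (i0 : ℕ)
    (predμ predξ : List A → A)
    (hpredμ : ∀ l a, condP (μs i0) l a ≤ condP (μs i0) l (predμ l))
    (hpredξ : ∀ l a, condP ξ l a ≤ condP ξ l (predξ l)) :
    (∀ n : ℕ, 0 < errE (μs i0) predμ n →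
      errE (μs i0) predξ n / errE (μs i0) predμ n ≤
        1 + 2 * relEnt (μs i0) ξ n / errE (μs i0) predμ n +
          2 * Real.sqrt (relEnt (μs i0) ξ n / errE (μs i0) predμ n)) ∧
    (Tendsto (fun n => errE (μs i0) predμ n) atTop atTop →
      Tendsto (fun n => errE (μs i0) predξ n / errE (μs i0) predμ n) atTop (nhds 1)) := by
  obtain rfl : ξ = fun l => ∑' i, w i * μs i l := funext hξ
  have hw : ∀ i, 0 ≤ w i := fun i => (hwpos i).le
  have hμs : ∀ i, IsPrefixMeasure (μs i) := fun i => ⟨hnn i, hroot i, hcompat i⟩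
  have hmix := isPrefixMeasure_tsum hw hμs hwsum
  have hwξ := mul_le_tsum_of_isPrefixMeasure hw hμs hwsum.summable i0
  have hdom : ∀ l, 0 < μs i0 l → 0 < ∑' i, w i * μs i l :=
    fun l hl => (mul_pos (hwpos i0) hl).trans_le (hwξ l)
  have hbound := excessBound_errE (hμs i0) hmix hdom hpredμ hpredξ
  have hrelEnt := relEnt_nonneg (hμs i0) hmix hdom
  refine ⟨fun n hn => (hbound n).div_le hn (hrelEnt n), fun hE => ?_⟩
  exact ExcessBound.tendsto_div_nhds_one hE hrelEnt
    (relEnt_le_log_inv (hμs i0) hmix.nil (hwpos i0) hwξ)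
    (errE_le_errE_of_isMax (hnn i0) hpredμ predξ) hbound
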